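/- Let k ≥ 3 be odd and N the largest odd number with N ≤ k/3. For every polymorphism f: C_k^n → C_3, we have Σ_{i=1}^n |deg_i f| ≤ N and Σ_{i=1}^n deg_i f is odd. Consequently the map δ sending f to the linear function (x_1,...,x_n) ↦ Σ deg_i f · x_i lands in the minion Z_{≤N}. -/

import Mathlib

/-- The oriented edge `[u,v]` as an edge chain: the antisymmetrized generator. -/
noncomputable def oe {V : Type*} [DecidableEq V] (u v : V) : V × V →₀ ℤ :=
  Finsupp.single (u, v) 1 - Finsupp.single (v, u) 1

/-- The map on edge chains induced by a map on vertices. -/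
noncomputable def fE {V W : Type*} [DecidableEq V] [DecidableEq W] (f : V → W) :
    (V × V →₀ ℤ) →+ (W × W →₀ ℤ) :=
  Finsupp.mapDomain.addMonoidHom (Prod.map f f)

/-- Adjacency in the `m`-cycle on vertex set `ZMod m`. -/
def CycAdj (m : ℕ) (u v : ZMod m) : Prop := v = u + 1 ∨ v = u - 1

/-- The oriented cycle `O_m = [0,1] + [1,2] + ⋯ + [m-1,0]` as an edge chain. -/
noncomputable def cycO (m : ℕ) : ZMod m × ZMod m →₀ ℤ :=
  ∑ i ∈ Finset.range m, oe (i : ZMod m) ((i : ZMod m) + 1)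

/-- Adjacency in the direct power `C_kⁿ`: coordinatewise adjacency in `C_k`. -/
def PowAdj (k n : ℕ) (x y : Fin n → ZMod k) : Prop := ∀ i, CycAdj k (x i) (y i)

open Classical in
/-- The edge chain `O_{k,i}ⁿ` of all oriented edges of `C_kⁿ` whose `i`-th coordinate is
oriented according to `O_k`. -/
noncomputable def Okin (k n : ℕ) [NeZero k] (i : Fin n) :
    ((Fin n → ZMod k) × (Fin n → ZMod k)) →₀ ℤ :=
  ∑ p ∈ Finset.univ.filter
      (fun p : (Fin n → ZMod k) × (Fin n → ZMod k) =>
        PowAdj k n p.1 p.2 ∧ p.2 i = p.1 i + 1),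
    oe p.1 p.2

/-- Membership in the minion `Z_{≤N}`: `f : ℤⁿ → ℤ` is of the form
`f(x) = c₁x₁ + ⋯ + cₙxₙ` with `Σ|cᵢ| ≤ N` and `Σcᵢ` odd. -/
def MemZle (N : ℕ) {n : ℕ} (f : (Fin n → ℤ) → ℤ) : Prop :=
  ∃ c : Fin n → ℤ, (∀ x, f x = ∑ i, c i * x i) ∧
    (∑ i, |c i|) ≤ (N : ℤ) ∧ Odd (∑ i, c i)

/-! ### Auxiliary development -/

open Finset
set_option linter.unusedSectionVars false

section Aux

/-- The sign of a step in `C₃`. -/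
def sgn3 (a b : ZMod 3) : ℤ := if b = a + 1 then 1 else if b = a - 1 then -1 else 0

/-- The total displacement of a two-step walk in `C₃`. -/
def tt3 (a c : ZMod 3) : ℤ := if c = a + 2 then 2 else if c = a + 1 then -2 else 0

lemma sgn3_anti : ∀ a b : ZMod 3, sgn3 b a = - sgn3 a b := by decide
lemma sgn3_step : ∀ a b c : ZMod 3, a ≠ b → b ≠ c → sgn3 a b + sgn3 b c = tt3 a c := by decide
lemma sgn3_cast : ∀ a b : ZMod 3, a ≠ b → ((sgn3 a b : ℤ) : ZMod 3) = b - a := by decide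
lemma sgn3_abs : ∀ a b : ZMod 3, a ≠ b → |sgn3 a b| = 1 := by decide
lemma sgn3_odd : ∀ a b : ZMod 3, a ≠ b → Odd (sgn3 a b) := by decide

/-- The weight functional pairing an edge chain of `C₃` with the sign function. -/
noncomputable def phi3 : (ZMod 3 × ZMod 3 →₀ ℤ) →+ ℤ :=
  Finsupp.liftAddHom (fun p => AddMonoidHom.mulRight (sgn3 p.1 p.2))

lemma phi3_single (p : ZMod 3 × ZMod 3) (c : ℤ) :
    phi3 (Finsupp.single p c) = c * sgn3 p.1 p.2 := by
  simp [phi3]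

lemma phi3_oe (a b : ZMod 3) : phi3 (oe a b) = sgn3 a b - sgn3 b a := by
  rw [oe, map_sub, phi3_single, phi3_single]; ring

lemma phi3_cycO3 : phi3 (cycO 3) = 6 := by
  rw [cycO, map_sum]
  simp only [phi3_oe]
  rw [Finset.sum_range_succ, Finset.sum_range_succ, Finset.sum_range_succ,
    Finset.sum_range_zero]
  norm_num
  decide

lemma fE_oe {V W : Type*} [DecidableEq V] [DecidableEq W] (f : V → W) (u v : V) :
    fE f (oe u v) = oe (f u) (f v) := by
  rw [oe, map_sub]
  show Finsupp.mapDomain (Prod.map f f) _ - Finsupp.mapDomain (Prod.map f f) _ = _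
  rw [Finsupp.mapDomain_single, Finsupp.mapDomain_single]
  rfl

lemma odd_int_cast_two {a : ℤ} (h : Odd a) : ((a : ℤ) : ZMod 2) = 1 := by
  obtain ⟨m, rfl⟩ := h; push_cast; ring_nf
  rw [show ((2:ZMod 2)) = 0 from rfl]; ring

lemma odd_of_cast_two {a : ℤ} (h : ((a : ℤ) : ZMod 2) = 1) : Odd a := by
  by_contra h'
  have hev : Even a := Int.not_odd_iff_even.mp h'
  have := (ZMod.intCast_zmod_eq_zero_iff_dvd a 2).mpr (by exact_mod_cast hev.two_dvd)
  rw [this] at h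
  exact one_ne_zero h.symm

lemma odd_nat_cast_two {a : ℕ} (h : Odd a) : ((a : ℕ) : ZMod 2) = 1 := by
  obtain ⟨m, rfl⟩ := h; push_cast; ring_nf
  rw [show ((2:ZMod 2)) = 0 from rfl]; ring

end Aux

section W

variable (k n : ℕ) [NeZero k]

/-- The step vector in `(ZMod k)ⁿ` associated with a sign pattern. -/
def vst (ε : Fin n → Bool) : Fin n → ZMod k := fun i => if ε i then 1 else -1

lemma powAdj_vst (ε : Fin n → Bool) (x : Fin n → ZMod k) : PowAdj k n x (x + vst k n ε) := by
  intro i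
  by_cases h : ε i
  · left; simp [vst, h]
  · right; simp [vst, h, sub_eq_add_neg]

variable (f : (Fin n → ZMod k) → ZMod 3)

/-- Total winding of `f` in the direction `ε`. -/
def Wf (ε : Fin n → Bool) : ℤ := ∑ x : Fin n → ZMod k, sgn3 (f x) (f (x + vst k n ε))

/-- Total two-step displacement of `f` along the translation `u`. -/
def Ff (u : Fin n → ZMod k) : ℤ := ∑ x : Fin n → ZMod k, tt3 (f x) (f (x + u))

lemma sum_trans (g : (Fin n → ZMod k) → ℤ) (c : Fin n → ZMod k) :
    ∑ x : Fin n → ZMod k, g (x + c) = ∑ x : Fin n → ZMod k, g x :=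
  Fintype.sum_equiv (Equiv.addRight c) _ _ (fun _ => rfl)

lemma cardPiZMod : Fintype.card (Fin n → ZMod k) = k ^ n := by
  rw [Fintype.card_fun, ZMod.card, Fintype.card_fin]

variable {f} (hf : ∀ x y, PowAdj k n x y → f x ≠ f y)

include hf in
lemma W_add (ε ε' : Fin n → Bool) :
    Wf k n f ε + Wf k n f ε' = Ff k n f (vst k n ε + vst k n ε') := by
  have h2 : Wf k n f ε'
      = ∑ x : Fin n → ZMod k, sgn3 (f (x + vst k n ε)) (f (x + vst k n ε + vst k n ε')) := by
    rw [Wf, ← sum_trans k n (fun x => sgn3 (f x) (f (x + vst k n ε'))) (vst k n ε)]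
  rw [Wf, h2, Ff, ← Finset.sum_add_distrib]
  refine Finset.sum_congr rfl fun x _ => ?_
  rw [← add_assoc]
  exact sgn3_step _ _ _ (hf _ _ (powAdj_vst k n ε x)) (hf _ _ (powAdj_vst k n ε' (x + vst k n ε)))

lemma vst_not (ε : Fin n → Bool) : vst k n (fun i => !ε i) = - vst k n ε := by
  funext i
  by_cases h : ε i <;> simp [vst, h]

lemma W_not (ε : Fin n → Bool) : Wf k n f (fun i => !ε i) = - Wf k n f ε := by
  have h1 : Wf k n f (fun i => !ε i)
      = ∑ x : Fin n → ZMod k, sgn3 (f (x + vst k n ε)) (f x) := by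
    rw [Wf, vst_not,
      ← sum_trans k n (fun x => sgn3 (f x) (f (x + -vst k n ε))) (vst k n ε)]
    refine Finset.sum_congr rfl fun x _ => ?_
    simp
  rw [h1, Wf, ← Finset.sum_neg_distrib]
  exact Finset.sum_congr rfl fun x _ => sgn3_anti _ _

/-- The doubled coordinate vector `2eᵢ`. -/
def e2 (i : Fin n) : Fin n → ZMod k := fun j => if j = i then 2 else 0

/-- Flip the `i`-th sign. -/
def flip1 {n : ℕ} (i : Fin n) (ε : Fin n → Bool) : Fin n → Bool :=
  fun j => if j = i then !ε j else ε j

include hf in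
lemma W_flip (i : Fin n) (ε : Fin n → Bool) (hεi : ε i = true) :
    Wf k n f ε - Wf k n f (flip1 i ε) = Ff k n f (e2 k n i) := by
  have h1 := W_add k n hf ε (fun j => !(flip1 i ε j))
  rw [W_not] at h1
  have h2 : vst k n ε + vst k n (fun j => !(flip1 i ε j)) = e2 k n i := by
    funext j
    by_cases h : j = i
    · subst h
      simp [vst, flip1, hεi, e2, Pi.add_apply, one_add_one_eq_two]
    · by_cases h' : ε j <;> simp [vst, flip1, h, h', e2, Pi.add_apply]
  rw [h2] at h1
  linarith

/-- The sign pattern which is `-1` exactly on `S`. -/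
def epsS {n : ℕ} (S : Finset (Fin n)) : Fin n → Bool := fun j => decide (j ∉ S)

include hf in
lemma W_epsS (S : Finset (Fin n)) :
    Wf k n f (epsS S) = Wf k n f (fun _ => true) - ∑ i ∈ S, Ff k n f (e2 k n i) := by
  classical
  induction S using Finset.induction_on with
  | empty =>
    have h : epsS (∅ : Finset (Fin n)) = fun _ => true := by
      funext j; simp [epsS]
    rw [h]; simp
  | @insert a S ha ih =>
    have hflip : epsS (insert a S) = flip1 a (epsS S) := by
      funext j
      by_cases h : j = a
      · subst h; simp [flip1, epsS, ha]
      · simp [flip1, epsS, h, Finset.mem_insert]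
    have hεa : epsS S a = true := by simp [epsS, ha]
    have := W_flip k n hf a (epsS S) hεa
    rw [hflip, Finset.sum_insert ha]
    linarith [ih]

include hf in
lemma sum_Ff : ∑ i : Fin n, Ff k n f (e2 k n i) = 2 * Wf k n f (fun _ => true) := by
  have h1 := W_epsS k n hf (univ : Finset (Fin n))
  have h2 : epsS (univ : Finset (Fin n)) = fun i => !((fun _ : Fin n => true) i) := by
    funext j; simp [epsS]
  rw [h2, W_not] at h1
  linarith

include hf in
lemma kW (hk : 3 ≤ k) (hkodd : Odd k) (N : ℕ)
    (hNmax : ∀ N' : ℕ, Odd N' → 3 * N' ≤ k → N' ≤ N) (ε : Fin n → Bool) :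
    ∃ M : ℤ, (k : ℤ) * Wf k n f ε = 3 * M ∧ Odd M ∧ |M| ≤ (N : ℤ) * (k : ℤ) ^ n := by
  classical
  set v := vst k n ε with hv
  have hstep : ∀ (x : Fin n → ZMod k) (j : ℕ), x + (j + 1) • v = (x + j • v) + v := by
    intro x j
    rw [succ_nsmul, add_assoc]
  have hne : ∀ (x : Fin n → ZMod k) (j : ℕ), f (x + j • v) ≠ f (x + (j + 1) • v) := by
    intro x j
    rw [hstep]
    exact hf _ _ (powAdj_vst k n ε (x + j • v))
  set C : (Fin n → ZMod k) → ℤ :=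
    fun x => ∑ j ∈ Finset.range k, sgn3 (f (x + j • v)) (f (x + (j + 1) • v)) with hC
  have hkv : k • v = 0 := by
    funext i
    rw [Pi.smul_apply, Pi.zero_apply, nsmul_eq_mul, ZMod.natCast_self, zero_mul]
  have hC3 : ∀ x, (3 : ℤ) ∣ C x := by
    intro x
    have : ((C x : ℤ) : ZMod 3) = 0 := by
      rw [hC]
      push_cast
      rw [Finset.sum_congr rfl (fun j _ => sgn3_cast _ _ (hne x j))]
      rw [Finset.sum_range_sub (fun j => f (x + j • v))]
      rw [hkv]
      simp
    exact_mod_cast (ZMod.intCast_zmod_eq_zero_iff_dvd (C x) 3).mp this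
  have hCodd : ∀ x, Odd (C x) := by
    intro x
    apply odd_of_cast_two
    rw [hC]
    push_cast
    rw [Finset.sum_congr rfl (fun j _ => odd_int_cast_two (sgn3_odd _ _ (hne x j)))]
    rw [Finset.sum_const, Finset.card_range, nsmul_eq_mul, mul_one]
    exact odd_nat_cast_two hkodd
  have hCabs : ∀ x, |C x| ≤ (k : ℤ) := by
    intro x
    calc |C x| ≤ ∑ j ∈ Finset.range k, |sgn3 (f (x + j • v)) (f (x + (j + 1) • v))| :=
          Finset.abs_sum_le_sum_abs _ _
      _ = ∑ _j ∈ Finset.range k, 1 :=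
          Finset.sum_congr rfl (fun j _ => sgn3_abs _ _ (hne x j))
      _ = (k : ℤ) := by simp
  have hm : ∀ x, C x = 3 * (C x / 3) := fun x => (Int.mul_ediv_cancel' (hC3 x)).symm
  have hmodd : ∀ x, Odd (C x / 3) := by
    intro x
    have := hCodd x
    rw [hm x, Int.odd_mul] at this
    exact this.2
  have hmabs : ∀ x, |C x / 3| ≤ (N : ℤ) := by
    intro x
    have h3 : |(3:ℤ) * (C x / 3)| ≤ (k : ℤ) := by
      rw [← hm x]; exact hCabs x
    rw [abs_mul] at h3
    norm_num at h3
    have hna : 3 * (C x / 3).natAbs ≤ k := by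
      have : ((3 * (C x / 3).natAbs : ℕ) : ℤ) ≤ (k : ℤ) := by
        push_cast
        exact h3
      exact_mod_cast this
    have := hNmax (C x / 3).natAbs (Int.natAbs_odd.mpr (hmodd x)) hna
    calc |C x / 3| = ((C x / 3).natAbs : ℤ) := (Int.natCast_natAbs _).symm
      _ ≤ (N : ℤ) := by exact_mod_cast this
  have hkW : (k : ℤ) * Wf k n f ε = ∑ x : Fin n → ZMod k, C x := by
    rw [hC]
    rw [Finset.sum_comm]
    have : ∀ j ∈ Finset.range k,
        (∑ x : Fin n → ZMod k, sgn3 (f (x + j • v)) (f (x + (j + 1) • v)))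
          = Wf k n f ε := by
      intro j _
      rw [Wf]
      rw [← sum_trans k n (fun x => sgn3 (f x) (f (x + v))) (j • v)]
      exact Finset.sum_congr rfl (fun x _ => by rw [hstep])
    rw [Finset.sum_congr rfl this, Finset.sum_const, Finset.card_range, nsmul_eq_mul]
  refine ⟨∑ x : Fin n → ZMod k, C x / 3, ?_, ?_, ?_⟩
  · rw [hkW, Finset.mul_sum]
    exact Finset.sum_congr rfl (fun x _ => hm x)
  · apply odd_of_cast_two
    push_cast
    rw [Finset.sum_congr rfl (fun x _ => odd_int_cast_two (hmodd x))]
    rw [Finset.sum_const, nsmul_eq_mul, mul_one, Finset.card_univ, cardPiZMod]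
    exact odd_nat_cast_two hkodd.pow
  · calc |∑ x : Fin n → ZMod k, C x / 3| ≤ ∑ x : Fin n → ZMod k, |C x / 3| :=
        Finset.abs_sum_le_sum_abs _ _
      _ ≤ ∑ _x : Fin n → ZMod k, (N : ℤ) := Finset.sum_le_sum (fun x _ => hmabs x)
      _ = (N : ℤ) * (k : ℤ) ^ n := by
        rw [Finset.sum_const, nsmul_eq_mul, Finset.card_univ, cardPiZMod]
        push_cast; ring

include hf in
/-- Reindexing of the edge sum defining the degree. -/
lemma reindex (hk : 3 ≤ k) (i : Fin n)
    (s : Finset ((Fin n → ZMod k) × (Fin n → ZMod k)))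
    (hs : ∀ p, p ∈ s ↔ PowAdj k n p.1 p.2 ∧ p.2 i = p.1 i + 1) :
    ∑ p ∈ s, sgn3 (f p.1) (f p.2)
      = ∑ ε ∈ Finset.univ.filter (fun ε : Fin n → Bool => ε i = true), Wf k n f ε := by
  classical
  have hne1 : (-1 : ZMod k) ≠ 1 := by
    intro h
    have h2 : ((2 : ℕ) : ZMod k) = 0 := by push_cast; linear_combination -h
    have hdvd := (ZMod.natCast_eq_zero_iff 2 k).mp h2
    have := Nat.le_of_dvd (by norm_num) hdvd
    omega
  have key : ∑ p ∈ s, sgn3 (f p.1) (f p.2)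
      = ∑ q ∈ (Finset.univ.filter (fun ε : Fin n → Bool => ε i = true)) ×ˢ
          (Finset.univ : Finset (Fin n → ZMod k)),
          sgn3 (f q.2) (f (q.2 + vst k n q.1)) := by
    have hrecon : ∀ p ∈ s,
        p.1 + vst k n (fun j => decide (p.2 j = p.1 j + 1)) = p.2 := by
      intro p hp
      funext j
      have hadj := ((hs p).mp hp).1 j
      rw [Pi.add_apply]
      by_cases hc : p.2 j = p.1 j + 1
      · rw [show vst k n (fun j => decide (p.2 j = p.1 j + 1)) j = 1 from by
          simp [vst, hc], hc]
      · rcases hadj with h1 | h1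
        · exact absurd h1 hc
        · rw [show vst k n (fun j => decide (p.2 j = p.1 j + 1)) j = -1 from by
            simp [vst, hc], h1, sub_eq_add_neg]
    refine Finset.sum_nbij'
      (fun p => ((fun j => decide (p.2 j = p.1 j + 1)), p.1))
      (fun q => (q.2, q.2 + vst k n q.1)) ?_ ?_ ?_ ?_ ?_
    · intro p hp
      rw [Finset.mem_product]
      refine ⟨?_, Finset.mem_univ _⟩
      rw [Finset.mem_filter]
      exact ⟨Finset.mem_univ _, by simp [((hs p).mp hp).2]⟩
    · intro q hq
      rw [Finset.mem_product, Finset.mem_filter] at hq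
      rw [hs]
      refine ⟨powAdj_vst k n q.1 q.2, ?_⟩
      have hqi : q.1 i = true := hq.1.2
      show (q.2 + vst k n q.1) i = q.2 i + 1
      rw [Pi.add_apply]
      simp [vst, hqi]
    · intro p hp
      exact Prod.ext rfl (hrecon p hp)
    · intro q hq
      refine Prod.ext ?_ rfl
      funext j
      show decide ((q.2 + vst k n q.1) j = q.2 j + 1) = q.1 j
      by_cases hb : q.1 j
      · simp [vst, hb, Pi.add_apply]
      · have hbf : q.1 j = false := by
          cases hq1j : q.1 j
          · rfl
          · exact absurd hq1j hb
        have hne2 : (q.2 + vst k n q.1) j ≠ q.2 j + 1 := by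
          rw [Pi.add_apply]
          intro h
          have h' := add_left_cancel h
          rw [show vst k n q.1 j = -1 from by simp [vst, hbf]] at h'
          exact hne1 h'
        rw [decide_eq_false hne2, hbf]
    · intro p hp
      rw [hrecon p hp]
  rw [key, Finset.sum_product]
  rfl

lemma card_filt (i : Fin n) :
    (Finset.univ.filter (fun ε : Fin n → Bool => ε i = true)).card = 2 ^ (n - 1) := by
  classical
  have hbij : (Finset.univ.filter (fun ε : Fin n → Bool => ε i = true)).card
      = (Finset.univ.filter (fun ε : Fin n → Bool => ¬(ε i = true))).card := by
    refine Finset.card_nbij' (flip1 i) (flip1 i) ?_ ?_ ?_ ?_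
    · intro ε hε
      rw [Finset.mem_coe, Finset.mem_filter] at hε ⊢
      refine ⟨Finset.mem_univ _, ?_⟩
      simp [flip1, hε.2]
    · intro ε hε
      rw [Finset.mem_coe, Finset.mem_filter] at hε ⊢
      refine ⟨Finset.mem_univ _, ?_⟩
      have : ε i = false := by
        cases hεi : ε i
        · rfl
        · exact absurd hεi hε.2
      simp [flip1, this]
    · intro ε _
      funext j
      by_cases h : j = i <;> simp [flip1, h]
    · intro ε _
      funext j
      by_cases h : j = i <;> simp [flip1, h]
  have hsum := Finset.card_filter_add_card_filter_not
    (s := (Finset.univ : Finset (Fin n → Bool))) (p := fun ε => ε i = true)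
  rw [← hbij] at hsum
  have hcard : (Finset.univ : Finset (Fin n → Bool)).card = 2 ^ n := by
    rw [Finset.card_univ, Fintype.card_fun, Fintype.card_bool, Fintype.card_fin]
  have hn : 1 ≤ n := i.pos
  have h2n : 2 ^ n = 2 * 2 ^ (n - 1) := by
    conv_lhs => rw [show n = (n - 1) + 1 from (Nat.sub_add_cancel hn).symm]
    rw [pow_succ']
  have h2 : 2 * (Finset.univ.filter (fun ε : Fin n → Bool => ε i = true)).card
      = 2 * 2 ^ (n - 1) := by
    rw [two_mul, hsum, hcard, h2n]
  exact Nat.eq_of_mul_eq_mul_left (by norm_num) h2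

include hf in
lemma Ff_e2 (hk : 3 ≤ k) (d : Fin n → ℤ)
    (hd : ∀ i, fE f (Okin k n i) = ((2 * (k : ℤ)) ^ (n - 1) * d i) • cycO 3) (i : Fin n) :
    Ff k n f (e2 k n i) = 6 * (k : ℤ) ^ (n - 1) * d i := by
  classical
  -- step 1: A_i = 3 * (2k)^(n-1) * d i
  have hphi := congrArg phi3 (hd i)
  rw [map_zsmul, phi3_cycO3, smul_eq_mul, Okin, map_sum, map_sum] at hphi
  simp only [fE_oe, phi3_oe] at hphi
  have hanti : ∀ p : (Fin n → ZMod k) × (Fin n → ZMod k),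
      sgn3 (f p.1) (f p.2) - sgn3 (f p.2) (f p.1) = 2 * sgn3 (f p.1) (f p.2) := by
    intro p
    rw [sgn3_anti (f p.1) (f p.2)]
    ring
  rw [Finset.sum_congr rfl (fun p _ => hanti p), ← Finset.mul_sum] at hphi
  rw [reindex k n hf hk i _ (fun p => by simp [Finset.mem_filter])] at hphi
  have hA : ∑ ε ∈ Finset.univ.filter (fun ε : Fin n → Bool => ε i = true), Wf k n f ε
      = 3 * ((2 * (k : ℤ)) ^ (n - 1) * d i) := by
    have : (2 : ℤ) * (3 * ((2 * (k : ℤ)) ^ (n - 1) * d i))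
        = 2 * ∑ ε ∈ Finset.univ.filter (fun ε : Fin n → Bool => ε i = true), Wf k n f ε := by
      rw [hphi]; ring
    linarith
  -- step 2: sum of flips
  set T := Finset.univ.filter (fun ε : Fin n → Bool => ε i = true) with hT
  have hsplit : ∑ ε ∈ T, (Wf k n f ε - Wf k n f (flip1 i ε))
      = (T.card : ℤ) * Ff k n f (e2 k n i) := by
    rw [Finset.sum_congr rfl (fun ε hε => W_flip k n hf i ε (by
      rw [hT, Finset.mem_filter] at hε; exact hε.2))]
    rw [Finset.sum_const, nsmul_eq_mul]
  have hnegsum : ∑ ε ∈ T, Wf k n f (flip1 i ε) = - ∑ ε ∈ T, Wf k n f ε := by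
    have hWflip : ∀ ε, Wf k n f (flip1 i ε)
        = - Wf k n f (fun j => !(flip1 i ε j)) := by
      intro ε
      rw [W_not k n (flip1 i ε)]
      ring
    rw [Finset.sum_congr rfl (fun ε _ => hWflip ε), ← Finset.sum_neg_distrib]
    refine Finset.sum_nbij' (fun ε => fun j => !(flip1 i ε j))
      (fun ε => fun j => !(flip1 i ε j)) ?_ ?_ ?_ ?_ ?_
    · intro ε hε
      rw [hT, Finset.mem_filter] at hε ⊢
      refine ⟨Finset.mem_univ _, ?_⟩
      simp [flip1, hε.2]
    · intro ε hε
      rw [hT, Finset.mem_filter] at hε ⊢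
      refine ⟨Finset.mem_univ _, ?_⟩
      simp [flip1, hε.2]
    · intro ε _
      funext j
      by_cases h : j = i <;> simp [flip1, h]
    · intro ε _
      funext j
      by_cases h : j = i <;> simp [flip1, h]
    · intro ε _
      rfl
  have h2A : (T.card : ℤ) * Ff k n f (e2 k n i)
      = 2 * (3 * ((2 * (k : ℤ)) ^ (n - 1) * d i)) := by
    rw [← hsplit, Finset.sum_sub_distrib, hnegsum, hA]
    ring
  have hcardT : (T.card : ℤ) = 2 ^ (n - 1) := by
    rw [hT, card_filt]
    push_cast
    ring
  rw [hcardT] at h2A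
  have hpow : (2 * (k : ℤ)) ^ (n - 1) = 2 ^ (n - 1) * (k : ℤ) ^ (n - 1) := mul_pow _ _ _
  have h2ne : ((2 : ℤ) ^ (n - 1)) ≠ 0 := pow_ne_zero _ two_ne_zero
  apply mul_left_cancel₀ h2ne
  rw [h2A, hpow]
  ring

end W

/-! ### The main theorem -/

/-- Let `k ≥ 3` be odd and `N` the largest odd number with `N ≤ k/3` (i.e. `3N ≤ k`).
For every polymorphism `f : C_kⁿ → C_3` with degrees `d i` at its coordinates,
`Σᵢ |d i| ≤ N` and `Σᵢ d i` is odd; consequently `δ(f) = (x ↦ Σᵢ d i • x i)` lies in the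
minion `Z_{≤N}`. -/
theorem degrees_bounded (k : ℕ) [NeZero k] (hk : 3 ≤ k) (hkodd : Odd k)
    (N : ℕ) (hNodd : Odd N) (hNk : 3 * N ≤ k)
    (hNmax : ∀ N' : ℕ, Odd N' → 3 * N' ≤ k → N' ≤ N)
    (n : ℕ) (f : (Fin n → ZMod k) → ZMod 3)
    (hf : ∀ x y, PowAdj k n x y → f x ≠ f y)
    (d : Fin n → ℤ)
    (hd : ∀ i, fE f (Okin k n i) = ((2 * (k : ℤ)) ^ (n - 1) * d i) • cycO 3) :
    (∑ i, |d i|) ≤ (N : ℤ) ∧ Odd (∑ i, d i) ∧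
      MemZle N (fun x : Fin n → ℤ => ∑ i, d i * x i) := by
  classical
  rcases Nat.eq_zero_or_pos n with hn0 | hn
  · subst hn0
    exact absurd rfl (hf (fun i => i.elim0) (fun i => i.elim0) (fun i => i.elim0))
  have hk0 : (0 : ℤ) < (k : ℤ) := by positivity
  have hkn0 : (0 : ℤ) < (k : ℤ) ^ n := by positivity
  have hK1 : (k : ℤ) ^ (n - 1) * (k : ℤ) = (k : ℤ) ^ n := by
    conv_rhs => rw [show n = (n - 1) + 1 from (Nat.sub_add_cancel hn).symm]
    rw [pow_succ]
  have hFf : ∀ i, Ff k n f (e2 k n i) = 6 * (k : ℤ) ^ (n - 1) * d i :=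
    Ff_e2 k n hf hk d hd
  have hsumF := sum_Ff k n hf
  -- parity
  obtain ⟨M, hM, hModd, _⟩ := kW k n hf hk hkodd N hNmax (fun _ => true)
  set K : ℤ := (k : ℤ) with hKdef
  have hFsum : ∀ (s : Finset (Fin n)), ∑ i ∈ s, Ff k n f (e2 k n i)
      = 6 * K ^ (n - 1) * ∑ i ∈ s, d i := by
    intro s
    rw [Finset.sum_congr rfl (fun i _ => hFf i), ← Finset.mul_sum]
  -- parity
  have h1 : 2 * Wf k n f (fun _ => true) = 6 * K ^ (n - 1) * ∑ i, d i :=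
    hsumF.symm.trans (hFsum Finset.univ)
  have hMeq : M = K ^ n * ∑ i, d i := by
    have e2 : K * (2 * Wf k n f (fun _ => true)) = 6 * M := by
      linear_combination 2 * hM
    have e1 : K * (2 * Wf k n f (fun _ => true)) = 6 * (K ^ n * ∑ i, d i) := by
      rw [h1, ← hK1]; ring
    linarith
  have hodd : Odd (∑ i, d i) := by
    have : Odd (K ^ n * ∑ i, d i) := hMeq ▸ hModd
    exact (Int.odd_mul.mp this).2
  -- bound
  set S : Finset (Fin n) := Finset.univ.filter (fun i => d i < 0) with hSdef
  have hWS := W_epsS k n hf S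
  obtain ⟨M', hM', _, hM'abs⟩ := kW k n hf hk hkodd N hNmax (epsS S)
  have hsplit : ∑ i ∈ S, Ff k n f (e2 k n i)
      + ∑ i ∈ Finset.univ.filter (fun i => ¬ d i < 0), Ff k n f (e2 k n i)
      = ∑ i, Ff k n f (e2 k n i) := by
    rw [hSdef]
    exact Finset.sum_filter_add_sum_filter_not Finset.univ (fun i => d i < 0) _
  have habs : ∑ i, |d i|
      = (∑ i ∈ Finset.univ.filter (fun i => ¬ d i < 0), d i)
        - ∑ i ∈ S, d i := by
    have e1 : ∑ i ∈ S, |d i| = - ∑ i ∈ S, d i := by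
      rw [← Finset.sum_neg_distrib]
      exact Finset.sum_congr rfl
        (fun i hi => abs_of_neg (by rw [hSdef] at hi; exact (Finset.mem_filter.mp hi).2))
    have e2 : ∑ i ∈ Finset.univ.filter (fun i => ¬ d i < 0), |d i|
        = ∑ i ∈ Finset.univ.filter (fun i => ¬ d i < 0), d i :=
      Finset.sum_congr rfl
        (fun i hi => abs_of_nonneg (not_lt.mp (Finset.mem_filter.mp hi).2))
    have e3 : ∑ i ∈ S, |d i|
        + ∑ i ∈ Finset.univ.filter (fun i => ¬ d i < 0), |d i| = ∑ i, |d i| := by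
      rw [hSdef]
      exact Finset.sum_filter_add_sum_filter_not Finset.univ (fun i => d i < 0) _
    linarith
  have h2WS : 2 * Wf k n f (epsS S) = 6 * K ^ (n - 1) * ∑ i, |d i| := by
    have e4 : 2 * Wf k n f (epsS S)
        = (∑ i ∈ Finset.univ.filter (fun i => ¬ d i < 0), Ff k n f (e2 k n i))
          - ∑ i ∈ S, Ff k n f (e2 k n i) := by
      have := hsumF
      linarith [hWS, hsplit]
    rw [e4, hFsum, hFsum, habs]
    ring
  have hM'eq : M' = K ^ n * ∑ i, |d i| := by
    have e2 : K * (2 * Wf k n f (epsS S)) = 6 * M' := by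
      linear_combination 2 * hM'
    have e1 : K * (2 * Wf k n f (epsS S)) = 6 * (K ^ n * ∑ i, |d i|) := by
      rw [h2WS, ← hK1]; ring
    linarith
  have hbound : (∑ i, |d i|) ≤ (N : ℤ) := by
    have h5 : K ^ n * (∑ i, |d i|) ≤ K ^ n * (N : ℤ) := by
      have h6 := le_trans (le_abs_self M') hM'abs
      rw [hM'eq] at h6
      linarith
    exact le_of_mul_le_mul_left h5 hkn0
  exact ⟨hbound, hodd, d, fun x => rfl, hbound, hodd⟩
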